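/- Let d, k ≥ 2. The map φ = (φ_1,…,φ_k) : A_k × [0,1] → (ℝ^d)^k given by φ_i(C,t) = x_i + t(p(x_i) − x_i) for C = (x_1,…,x_k) ∈ A_k satisfies: φ(C,t) ∈ F(ℝ^d,k) for all (C,t) ∈ A_k × [0,1]; φ is continuous; φ(C,0) = C; and φ(C,1) ∈ F(ℝ,k). That is, φ is a continuous deformation of A_k onto F(ℝ,k) inside F(ℝ^d,k). -/

import Mathlib

open unitInterval

noncomputable section

/-- Euclidean space ℝ^d. -/
abbrev E (d : ℕ) : Type := EuclideanSpace ℝ (Fin d)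

/-- The ordered configuration space F(ℝ^d, k) of k distinct points in ℝ^d,
viewed as the subspace of (ℝ^d)^k of injective tuples. -/
def Conf (d k : ℕ) : Set (Fin k → E d) := {x | Function.Injective x}

/-- The time i/(n-1) ∈ [0,1] at which the i-th configuration is visited. -/
def eTime (n : ℕ) (i : Fin n) : unitInterval :=
  Set.projIcc 0 1 zero_le_one ((i : ℝ) / ((n : ℝ) - 1))

/-- The evaluation map e_n : P(X) → X^n,
e_n(γ) = (γ(0), γ(1/(n-1)), …, γ((n-2)/(n-1)), γ(1)). -/
def evalMap {X : Type*} [TopologicalSpace X] (n : ℕ) (γ : C(unitInterval, X)) : Fin n → X :=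
  fun i => γ (eTime n i)

/-- `A ⊆ X^n` admits a continuous section of the evaluation map e_n. -/
def HasSec {X : Type*} [TopologicalSpace X] (n : ℕ) (A : Set (Fin n → X)) : Prop :=
  ∃ s : A → C(unitInterval, X), Continuous s ∧ ∀ a : A, evalMap n (s a) = (a : Fin n → X)

/-- The projection p : ℝ^d → ℝ^d onto the first coordinate axis,
p(y_1,…,y_d) = (y_1,0,…,0). -/
def projL {d : ℕ} (x : E d) : E d :=
  (WithLp.equiv 2 (Fin d → ℝ)).symm fun j => if (j : ℕ) = 0 then x j else 0

/-- cp(C) = cardinality of {p(x_1),…,p(x_k)}. -/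
def cp {d k : ℕ} (C : Fin k → E d) : ℕ := (Set.range fun i => projL (C i)).ncard

/-- The set A_i of configurations C ∈ F(ℝ^d,k) with cp(C) = i. -/
def Abig (d k i : ℕ) : Set (Fin k → E d) := {C | C ∈ Conf d k ∧ cp C = i}

/-- A tuple lies on the axis ℝ ⊂ ℝ^d, embedded via x ↦ (x,0,…,0). -/
def OnAxis {d k : ℕ} (x : Fin k → E d) : Prop :=
  ∀ i : Fin k, ∀ j : Fin d, (j : ℕ) ≠ 0 → x i j = 0

/-- The deformation φ, with components φ_i(C,t) = x_i + t(p(x_i) - x_i). -/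
def phi {d k : ℕ} (C : Fin k → E d) (t : ℝ) : Fin k → E d :=
  fun i => C i + t • (projL (C i) - C i)

section Projection

variable {d : ℕ}

lemma projL_apply (x : E d) (j : Fin d) :
    projL x j = if (j : ℕ) = 0 then x j else 0 := rfl

@[fun_prop]
lemma continuous_projL : Continuous (projL : E d → E d) := by
  refine (PiLp.continuous_toLp 2 _).comp (continuous_pi fun j => ?_)
  split_ifs
  · exact (continuous_apply j).comp (PiLp.continuous_ofLp 2 _)
  · exact continuous_const

end Projection

section Deformation

variable {d k : ℕ}

lemma injective_projL_comp_of_cp_eq {C : Fin k → E d} (h : cp C = k) :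
    Function.Injective fun i => projL (C i) := by
  have hcard : Nat.card (Fin k) ≤ Nat.card (Set.range fun i => projL (C i)) := by
    rw [Nat.card_coe_set_eq, Nat.card_fin]
    exact h.ge
  exact Subtype.val_injective.comp
    (Set.rangeFactorization_surjective.bijective_of_nat_card_le hcard).injective

lemma projL_phi (C : Fin k → E d) (t : ℝ) (i : Fin k) :
    projL (phi C t i) = projL (C i) := by
  ext j
  by_cases hj : (j : ℕ) = 0 <;> simp [phi, projL_apply, hj]

lemma phi_mem_conf {C : Fin k → E d} (hC : cp C = k) (t : ℝ) : phi C t ∈ Conf d k :=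
  fun a b hab => injective_projL_comp_of_cp_eq hC <| by
    simpa only [projL_phi] using congrArg projL hab

lemma continuous_phi : Continuous fun p : (Fin k → E d) × ℝ => phi p.1 p.2 := by
  unfold phi
  fun_prop

lemma phi_zero (C : Fin k → E d) : phi C 0 = C := by
  funext i
  simp [phi]

lemma onAxis_phi_one (C : Fin k → E d) : OnAxis (phi C 1) := by
  intro i j hj
  simp [phi, projL_apply, hj]

end Deformation

theorem stmt5_general (d k : ℕ) :
    (∀ C ∈ Abig d k k, ∀ t ∈ Set.Icc (0 : ℝ) 1, phi C t ∈ Conf d k) ∧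
    Continuous (fun p : ↥(Abig d k k) × unitInterval =>
      phi ((p.1 : Fin k → E d)) ((p.2 : ℝ))) ∧
    (∀ C ∈ Abig d k k, phi C 0 = C) ∧
    (∀ C ∈ Abig d k k, phi C 1 ∈ Conf d k ∧ OnAxis (phi C 1)) :=
  ⟨fun _ hC t _ => phi_mem_conf hC.2 t,
    continuous_phi.comp (continuous_subtype_val.prodMap continuous_subtype_val),
    fun C _ => phi_zero C,
    fun _ hC => ⟨phi_mem_conf hC.2 1, onAxis_phi_one _⟩⟩

/-- For d, k ≥ 2, the map φ(C,t) = (x_1 + t(p(x_1)-x_1), …,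
x_k + t(p(x_k)-x_k)) is a continuous deformation of A_k onto F(ℝ,k) inside
F(ℝ^d,k): it is collision-free for all t ∈ [0,1], continuous, φ(C,0) = C,
and φ(C,1) ∈ F(ℝ,k). -/
theorem stmt5 (d k : ℕ) (hd : 2 ≤ d) (hk : 2 ≤ k) :
    (∀ C ∈ Abig d k k, ∀ t ∈ Set.Icc (0 : ℝ) 1, phi C t ∈ Conf d k) ∧
    Continuous (fun p : ↥(Abig d k k) × unitInterval =>
      phi ((p.1 : Fin k → E d)) ((p.2 : ℝ))) ∧
    (∀ C ∈ Abig d k k, phi C 0 = C) ∧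
    (∀ C ∈ Abig d k k, phi C 1 ∈ Conf d k ∧ OnAxis (phi C 1)) :=
  stmt5_general d k
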